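/- arXiv:1407.6329 — 3 statements merged into one kernel-verified Lean document; each statement's English description precedes it below -/
import Mathlib

section
/- Let m ≥ 1 and n', n'' ≥ 0 be integers, and suppose C ⊆ ℤ4^{2m} × ℤ2^{2n'} × ℤ4^{n''} is an additive 1-perfect code with respect to the Doob D(m, n'+n'')-metric. Then n'' ≠ 1, and there exist an even integer Γ ≥ 0 and an integer Δ ≥ 2 such that 2m + n' + n'' = (2^{Γ+2Δ} − 1)/3, 3n' + n'' = 2^{Γ+Δ} − 1, and n'' ≤ 2^Δ − 1. -/
/-!
The Doob graph is the Cayley graph of its vertex group `V` with respect to the generators of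
its factors, so an additive perfect code `C` makes the closed unit ball `{0} ∪ S` a transversal
of `Q = V ⧸ C`, and `|Q| = 3(2m + n' + n'') + 1`. The group `Q` has exponent 4; as the ball is
symmetric, `2b` vanishes in `Q` exactly when it vanishes in `V`, so the kernel `K` of doubling
has `3n' + n'' + 1` elements. Both `K` and `2Q` are 2-groups with `|Q| = |2Q| |K|` and
`2Q ≤ K`, which gives `|2Q| = 2^Δ`, `|K| = 2^(Γ+Δ)`, and `Γ` is even since
`2^(Γ+2Δ) ≡ 1 (mod 3)`. Doubling the Shrikhande generators gives three distinct elements of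
`2Q`, and doubling the `ℤ₄` generators gives `n''` distinct nonzero ones. Finally, once
`4 ∣ |K|` the elements of `Q` sum to zero, while the ball sums to `(0, 0, 2, …, 2)`, a nonzero
ball element when `n'' = 1`.
-/

open SimpleGraph

/-- The box (Cartesian) product of an indexed family of simple graphs. -/
def boxPi {ι : Type*} {V : ι → Type*} (G : ∀ i, SimpleGraph (V i)) :
    SimpleGraph (∀ i, V i) where
  Adj x y := ∃ i, (G i).Adj (x i) (y i) ∧ ∀ j, j ≠ i → x j = y j
  symm := by
    constructor
    rintro x y ⟨i, h, he⟩
    exact ⟨i, (G i).adj_symm h, fun j hj => (he j hj).symm⟩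
  loopless := by
    constructor
    rintro x ⟨i, h, -⟩
    exact (G i).loopless.irrefl _ h

/-- The Shrikhande graph on `(ZMod 4) × (ZMod 4)`. -/
def Shri : SimpleGraph (ZMod 4 × ZMod 4) where
  Adj a b := a - b ∈
    ({(0, 1), (1, 0), (1, 1), (0, 3), (3, 0), (3, 3)} : Finset (ZMod 4 × ZMod 4))
  symm := by
    have h : ∀ a b : ZMod 4 × ZMod 4,
        a - b ∈ ({(0, 1), (1, 0), (1, 1), (0, 3), (3, 0), (3, 3)} :
          Finset (ZMod 4 × ZMod 4)) →
        b - a ∈ ({(0, 1), (1, 0), (1, 1), (0, 3), (3, 0), (3, 3)} :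
          Finset (ZMod 4 × ZMod 4)) := by decide
    exact ⟨fun a b hab => h a b hab⟩
  loopless := by
    constructor
    intro a h
    rw [sub_self] at h
    revert h
    decide

/-- The vertex set `ℤ₄^{2m} × ℤ₂^{2n'} × ℤ₄^{n''}`, the consecutive pairs of
`ZMod 4`- (resp. `ZMod 2`-) coordinates being grouped together. -/
abbrev DoobVtx (m n' n'' : ℕ) : Type :=
  (Fin m → ZMod 4 × ZMod 4) × (Fin n' → ZMod 2 × ZMod 2) × (Fin n'' → ZMod 4)

/-- The Doob graph `D(m, n' + n'')` on `ℤ₄^{2m} × ℤ₂^{2n'} × ℤ₄^{n''}`: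
a Shrikhande graph on each pair of the first `2m` `ZMod 4`-coordinates, a `K₄` on
each pair of `ZMod 2`-coordinates, and a `K₄` on each of the last `n''`
`ZMod 4`-coordinates; the whole graph is the box product of the factors. -/
def DoobGraphZ (m n' n'' : ℕ) : SimpleGraph (DoobVtx m n' n'') :=
  (boxPi fun _ : Fin m => Shri) □
    ((boxPi fun _ : Fin n' => (⊤ : SimpleGraph (ZMod 2 × ZMod 2))) □
      (boxPi fun _ : Fin n'' => (⊤ : SimpleGraph (ZMod 4))))

/-- `C` is a 1-perfect code in `G`: every vertex is at graph distance at most 1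
(i.e., equal or adjacent) from exactly one element of `C`. -/
def IsPerfectCode {V : Type*} (G : SimpleGraph V) (C : Set V) : Prop :=
  ∀ v : V, ∃! c : V, c ∈ C ∧ (v = c ∨ G.Adj v c)


open Function

namespace SimpleGraph

def IsCayley {V ι : Type*} [AddGroup V] (G : SimpleGraph V) (s : ι → V) : Prop :=
  ∀ x y, G.Adj x y ↔ ∃ i, x - y = s i

namespace IsCayley

variable {V W ι κ : Type*} [AddCommGroup V] [AddCommGroup W] {G : SimpleGraph V}
  {H : SimpleGraph W} {s : ι → V} {t : κ → W}

theorem ne_zero (hG : G.IsCayley s) (i : ι) : s i ≠ 0 := fun h =>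
  G.irrefl ((hG 0 0).2 ⟨i, by rw [sub_self, h]⟩)

theorem exists_eq_neg (hG : G.IsCayley s) (i : ι) : ∃ j, s j = -s i := by
  obtain ⟨j, hj⟩ := (hG 0 (s i)).1 ((hG (s i) 0).2 ⟨i, sub_zero _⟩).symm
  exact ⟨j, by rw [← hj, zero_sub]⟩

theorem eq_or_adj_iff (hG : G.IsCayley s) (v c : V) :
    v = c ∨ G.Adj v c ↔ ∃ o : Option ι, o.elim 0 s = v - c := by
  simp [hG v c, Option.exists, sub_eq_zero, eq_comm]

theorem injective_optionElim (hG : G.IsCayley s) (hs : Injective s) :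
    Injective fun o : Option ι => o.elim 0 s := by
  rintro (_ | i) (_ | j) h
  exacts [rfl, absurd h.symm (hG.ne_zero j), absurd h (hG.ne_zero i), congrArg some (hs h)]

theorem boxProd (hG : G.IsCayley s) (hH : H.IsCayley t) :
    (G □ H).IsCayley (Sum.elim (fun i => (s i, 0)) fun k => (0, t k)) := by
  rintro ⟨x₁, x₂⟩ ⟨y₁, y₂⟩
  simp only [boxProd_adj, hG x₁ y₁, hH x₂ y₂, Sum.exists, Sum.elim_inl, Sum.elim_inr,
    Prod.mk_sub_mk, Prod.mk.injEq, sub_eq_zero, exists_and_right, exists_and_left]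
  tauto

theorem boxPi [DecidableEq κ] (hG : G.IsCayley s) :
    (_root_.boxPi fun _ : κ => G).IsCayley fun p : κ × ι => Pi.single p.1 (s p.2) := by
  intro x y
  constructor
  · rintro ⟨k, hadj, hrest⟩
    obtain ⟨i, hi⟩ := (hG _ _).1 hadj
    refine ⟨(k, i), funext fun l => ?_⟩
    by_cases hl : l = k
    · subst hl
      simpa using hi
    · simp [Pi.single_eq_of_ne hl, hrest l hl]
  · rintro ⟨⟨k, i⟩, h⟩
    refine ⟨k, (hG _ _).2 ⟨i, by simpa using congrFun h k⟩, fun l hl => ?_⟩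
    simpa [Pi.single_eq_of_ne hl, sub_eq_zero] using congrFun h l

end IsCayley

end SimpleGraph

section Injective

variable {α β γ M N : Type*}

theorem Function.Injective.single_uncurry [DecidableEq α] [Zero M] {f : β → M}
    (hf : Injective f) (hf0 : ∀ b, f b ≠ 0) :
    Injective fun p : α × β => (Pi.single p.1 (f p.2) : α → M) := by
  rintro ⟨a, b⟩ ⟨a', b'⟩ h
  have hb := congrFun h a
  by_cases ha : a = a'
  · subst ha
    simp only [Pi.single_eq_same] at hb
    rw [hf hb]
  · simp only [Pi.single_eq_same, Pi.single_eq_of_ne ha] at hb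
    exact absurd hb (hf0 b)

theorem Function.Injective.sumElim_prod [Zero M] [Zero N] {f : β → M} {g : γ → N}
    (hf : Injective f) (hg : Injective g) (hf0 : ∀ b, f b ≠ 0) :
    Injective (Sum.elim (fun b => (f b, (0 : N))) fun c => ((0 : M), g c)) :=
  Injective.sumElim (fun _ _ h => hf (congrArg Prod.fst h))
    (fun _ _ h => hg (congrArg Prod.snd h)) fun b _ h => hf0 b (congrArg Prod.fst h)

end Injective

namespace IsPerfectCode

variable {V ι : Type*} [AddCommGroup V] {G : SimpleGraph V} {s : ι → V} {C : AddSubgroup V}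

theorem bijective_mk (hG : G.IsCayley s) (hs : Injective s) (hC : IsPerfectCode G C) :
    Bijective fun o : Option ι => ((o.elim 0 s : V) : V ⧸ C) := by
  constructor
  · intro o₁ o₂ h
    have hmem : o₁.elim 0 s - o₂.elim 0 s ∈ C := by
      rw [← QuotientAddGroup.eq_zero_iff, QuotientAddGroup.mk_sub, sub_eq_zero]
      exact h
    -- `o₁.elim 0 s` is adjacent or equal to the codewords `0` and `o₁.elim 0 s - o₂.elim 0 s`
    obtain ⟨c, -, huniq⟩ := hC (o₁.elim 0 s)
    have h₀ := huniq 0 ⟨C.zero_mem, (hG.eq_or_adj_iff _ _).2 ⟨o₁, (sub_zero _).symm⟩⟩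
    have h₁ := huniq _ ⟨hmem, (hG.eq_or_adj_iff _ _).2 ⟨o₂, (sub_sub_cancel _ _).symm⟩⟩
    exact hG.injective_optionElim hs (sub_eq_zero.1 (h₁.trans h₀.symm))
  · intro q
    induction q using QuotientAddGroup.induction_on with | H v => ?_
    obtain ⟨c, ⟨hc, hvc⟩, -⟩ := hC v
    obtain ⟨o, ho⟩ := (hG.eq_or_adj_iff v c).1 hvc
    refine ⟨o, ?_⟩
    dsimp only
    rw [ho, QuotientAddGroup.mk_sub, (QuotientAddGroup.eq_zero_iff c).2 hc, sub_zero]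

theorem card_quotient [Finite ι] (hG : G.IsCayley s) (hs : Injective s) (hC : IsPerfectCode G C) :
    Nat.card (V ⧸ C) = Nat.card ι + 1 := by
  rw [← Nat.card_eq_of_bijective _ (hC.bijective_mk hG hs), Finite.card_option]

theorem mk_add_self_eq_zero_iff (hG : G.IsCayley s) (hs : Injective s) (hC : IsPerfectCode G C)
    (o : Option ι) :
    ((o.elim 0 s : V) : V ⧸ C) + (o.elim 0 s : V) = 0 ↔ o.elim 0 s + o.elim 0 s = 0 := by
  refine ⟨fun h => ?_, fun h => by
    rw [← QuotientAddGroup.mk_add, h, QuotientAddGroup.mk_zero]⟩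
  obtain ⟨o', ho'⟩ : ∃ o' : Option ι, o'.elim 0 s = -o.elim 0 s := by
    cases o with
    | none => exact ⟨none, neg_zero.symm⟩
    | some i =>
      obtain ⟨j, hj⟩ := hG.exists_eq_neg i
      exact ⟨some j, hj⟩
  have : o' = o := (hC.bijective_mk hG hs).1 <| by
    simp only [ho', QuotientAddGroup.mk_neg]
    exact neg_eq_of_add_eq_zero_left h
  exact eq_neg_iff_add_eq_zero.1 (this ▸ ho')

theorem card_ker_nsmul_two (hG : G.IsCayley s) (hs : Injective s) (hC : IsPerfectCode G C) :
    Nat.card (nsmulAddMonoidHom 2 : V ⧸ C →+ V ⧸ C).ker =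
      Nat.card {o : Option ι // o.elim 0 s + o.elim 0 s = 0} := by
  refine Nat.card_congr ((Equiv.subtypeEquiv (Equiv.ofBijective _ (hC.bijective_mk hG hs))
    fun o => ?_).symm)
  simp [AddMonoidHom.mem_ker, two_nsmul, hC.mk_add_self_eq_zero_iff hG hs]

theorem sum_univ_quotient [Fintype ι] [Fintype (V ⧸ C)] (hG : G.IsCayley s) (hs : Injective s)
    (hC : IsPerfectCode G C) : ∑ q : V ⧸ C, q = ((∑ i, s i : V) : V ⧸ C) := by
  rw [← (hC.bijective_mk hG hs).sum_comp, Fintype.sum_option, ← QuotientAddGroup.mk_sum]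
  simp

end IsPerfectCode

section ExponentFour

variable {Q : Type*} [AddCommGroup Q]

theorem range_nsmul_two_le_ker (h4 : ∀ x : Q, 4 • x = 0) :
    (nsmulAddMonoidHom 2 : Q →+ Q).range ≤ (nsmulAddMonoidHom 2).ker := by
  rintro _ ⟨y, rfl⟩
  simp [AddMonoidHom.mem_ker, ← mul_nsmul, h4]

variable [Fintype Q]

theorem sum_univ_eq_index_nsmul_sum_subgroup (H : AddSubgroup Q) [DecidablePred (· ∈ H)]
    (hH : ∀ x : Q, Nat.card H • x = 0) : ∑ x : Q, x = H.index • ∑ h : H, (h : Q) := by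
  classical
  have hbij : Bijective fun p : (Q ⧸ H) × H => p.1.out + p.2 := by
    constructor
    · rintro ⟨q₁, h₁⟩ ⟨q₂, h₂⟩ he
      have hq : q₁ = q₂ := by
        simpa using congrArg (QuotientAddGroup.mk (s := H)) he
      subst hq
      simpa using he
    · intro x
      exact ⟨((x : Q ⧸ H), ⟨-(x : Q ⧸ H).out + x,
        QuotientAddGroup.eq.1 (QuotientAddGroup.out_eq' _)⟩), add_neg_cancel_left _ _⟩
  rw [← hbij.sum_comp, Fintype.sum_prod_type]
  simp [Finset.sum_add_distrib, ← Nat.card_eq_fintype_card, hH, AddSubgroup.index]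

theorem sum_univ_eq_zero_of_four_dvd (h4 : ∀ x : Q, 4 • x = 0)
    (hK : 4 ∣ Nat.card (nsmulAddMonoidHom 2 : Q →+ Q).ker)
    (hR : 2 ∣ Nat.card (nsmulAddMonoidHom 2 : Q →+ Q).range) : ∑ x : Q, x = 0 := by
  classical
  obtain ⟨a, ha⟩ := hK
  obtain ⟨b, hb⟩ := hR
  have hσ : ∑ h : (nsmulAddMonoidHom 2 : Q →+ Q).ker, (h : Q) ∈ (nsmulAddMonoidHom 2).ker :=
    AddSubgroup.sum_mem _ fun h _ => h.2
  rw [sum_univ_eq_index_nsmul_sum_subgroup _ fun x => by rw [ha, mul_nsmul, h4, nsmul_zero],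
    AddSubgroup.index_ker, hb, mul_nsmul]
  simp only [AddMonoidHom.mem_ker, nsmulAddMonoidHom_apply] at hσ
  rw [hσ, nsmul_zero]

end ExponentFour

namespace DoobGraphZ

variable {m n' n'' : ℕ}

def shriGen : Fin 6 → ZMod 4 × ZMod 4 := ![(0, 1), (1, 0), (1, 1), (0, 3), (3, 0), (3, 3)]

def k4Gen : Fin 3 → ZMod 2 × ZMod 2 := ![(0, 1), (1, 0), (1, 1)]

def z4Gen : Fin 3 → ZMod 4 := ![1, 2, 3]

theorem isCayley_shri : Shri.IsCayley shriGen := by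
  intro a b
  change a - b ∈ _ ↔ _
  generalize a - b = c
  revert c
  decide

theorem isCayley_k4 : (⊤ : SimpleGraph (ZMod 2 × ZMod 2)).IsCayley k4Gen := by
  intro a b
  rw [top_adj]
  revert a b
  decide

theorem isCayley_z4 : (⊤ : SimpleGraph (ZMod 4)).IsCayley z4Gen := by
  intro a b
  rw [top_adj]
  revert a b
  decide

abbrev GenIdx (m n' n'' : ℕ) : Type :=
  (Fin m × Fin 6) ⊕ (Fin n' × Fin 3) ⊕ (Fin n'' × Fin 3)

def gen (m n' n'' : ℕ) : GenIdx m n' n'' → DoobVtx m n' n'' :=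
  Sum.elim (fun p => (Pi.single p.1 (shriGen p.2), 0)) fun k =>
    (0, Sum.elim (fun p => (Pi.single p.1 (k4Gen p.2), 0))
      (fun p => (0, Pi.single p.1 (z4Gen p.2))) k)

theorem isCayley_gen : (DoobGraphZ m n' n'').IsCayley (gen m n' n'') :=
  isCayley_shri.boxPi.boxProd (isCayley_k4.boxPi.boxProd isCayley_z4.boxPi)

theorem gen_injective : Injective (gen m n' n'') :=
  ((by decide : Injective shriGen).single_uncurry isCayley_shri.ne_zero).sumElim_prod
    (((by decide : Injective k4Gen).single_uncurry isCayley_k4.ne_zero).sumElim_prod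
      ((by decide : Injective z4Gen).single_uncurry isCayley_z4.ne_zero)
      isCayley_k4.boxPi.ne_zero)
    isCayley_shri.boxPi.ne_zero

theorem card_genIdx : Nat.card (GenIdx m n' n'') = 3 * (2 * m + n' + n'') := by
  simp [Nat.card_eq_fintype_card]
  ring

theorem card_two_torsion_ball :
    Nat.card {o : Option (GenIdx m n' n'') //
      o.elim 0 (gen m n' n'') + o.elim 0 (gen m n' n'') = 0} = 3 * n' + n'' + 1 := by
  classical
  rw [Nat.card_eq_fintype_card, Fintype.card_subtype, Finset.card_filter, Fintype.sum_option,
    Fintype.sum_sum_type, Fintype.sum_sum_type, Fintype.sum_prod_type, Fintype.sum_prod_type,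
    Fintype.sum_prod_type]
  have hsh : ∀ a, shriGen a + shriGen a ≠ 0 := by decide
  have hk4 : ∀ a, k4Gen a + k4Gen a = 0 := by decide
  have hz4 : ∀ a, z4Gen a + z4Gen a = 0 ↔ a = 1 := by decide
  simp [gen, ← Pi.single_add, hsh, hk4, hz4]
  ring

theorem sum_gen : ∑ k, gen m n' n'' k = (0, 0, fun _ => 2) := by
  have hsh : ∑ a, shriGen a = 0 := by decide
  have hk4 : ∑ a, k4Gen a = 0 := by decide
  have hz4 : ∑ a, z4Gen a = 2 := by decide
  refine Prod.ext ?_ (Prod.ext ?_ ?_) <;> funext j <;>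
    simp [gen, Fintype.sum_sum_type, Fintype.sum_prod_type, Prod.fst_sum, Prod.snd_sum,
      Finset.sum_apply, Pi.single_apply, hsh, hk4, hz4]

theorem card_doobVtx : Nat.card (DoobVtx m n' n'') = 2 ^ (4 * m + 2 * n' + 2 * n'') := by
  simp [Nat.card_eq_fintype_card, pow_add, pow_mul]
  ring

theorem exists_card_addSubgroup_eq_two_pow (C : AddSubgroup (DoobVtx m n' n''))
    (H : AddSubgroup (DoobVtx m n' n'' ⧸ C)) : ∃ k, Nat.card H = 2 ^ k := by
  obtain ⟨k, -, hk⟩ := (Nat.dvd_prime_pow Nat.prime_two).1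
    ((H.card_addSubgroup_dvd_card.trans C.card_quotient_dvd_card).trans card_doobVtx.dvd)
  exact ⟨k, hk⟩

theorem nsmul_four_eq_zero {C : AddSubgroup (DoobVtx m n' n'')} (x : DoobVtx m n' n'' ⧸ C) :
    4 • x = 0 := by
  induction x using QuotientAddGroup.induction_on with | H v => ?_
  have hsh : ∀ z : ZMod 4 × ZMod 4, 4 • z = 0 := by decide
  have hk4 : ∀ z : ZMod 2 × ZMod 2, 4 • z = 0 := by decide
  have hz4 : ∀ z : ZMod 4, 4 • z = 0 := by decide
  have hv : 4 • v = 0 := by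
    refine Prod.ext ?_ (Prod.ext ?_ ?_) <;> funext j
    exacts [hsh _, hk4 _, hz4 _]
  rw [← QuotientAddGroup.mk_nsmul, hv, QuotientAddGroup.mk_zero]

variable {C : AddSubgroup (DoobVtx m n' n'')}

theorem card_quotient (hC : IsPerfectCode (DoobGraphZ m n' n'') C) :
    Nat.card (DoobVtx m n' n'' ⧸ C) = 3 * (2 * m + n' + n'') + 1 := by
  rw [hC.card_quotient isCayley_gen gen_injective, card_genIdx]

theorem card_ker_nsmul_two (hC : IsPerfectCode (DoobGraphZ m n' n'') C) :
    Nat.card (nsmulAddMonoidHom 2 : DoobVtx m n' n'' ⧸ C →+ _).ker = 3 * n' + n'' + 1 := by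
  rw [hC.card_ker_nsmul_two isCayley_gen gen_injective, card_two_torsion_ball]

theorem two_lt_card_range_nsmul_two (hm : 1 ≤ m) (hC : IsPerfectCode (DoobGraphZ m n' n'') C) :
    2 < Nat.card (nsmulAddMonoidHom 2 : DoobVtx m n' n'' ⧸ C →+ _).range := by
  classical
  let x : Fin 6 → DoobVtx m n' n'' ⧸ C := fun a => (gen m n' n'' (.inl (⟨0, hm⟩, a)) : _)
  have hx : ∀ a, 2 • x a ≠ 0 := fun a => by
    rw [two_nsmul]
    refine mt (hC.mk_add_self_eq_zero_iff isCayley_gen gen_injective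
      (some (.inl (⟨0, hm⟩, a)))).1 ?_
    simp only [Option.elim_some, gen, Sum.elim_inl, Prod.mk_add_mk, add_zero, ← Pi.single_add,
      Prod.mk_eq_zero, Pi.single_eq_zero_iff, and_true]
    revert a
    decide
  have hx2 : x 0 + x 1 = x 2 := by
    simp only [x, ← QuotientAddGroup.mk_add, gen, Sum.elim_inl, Prod.mk_add_mk, add_zero,
      ← Pi.single_add]
    congr 3
  rw [Nat.card_eq_fintype_card, Fintype.two_lt_card_iff]
  refine ⟨0, ⟨2 • x 0, x 0, rfl⟩, ⟨2 • x 1, x 1, rfl⟩, ?_, ?_, ?_⟩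
  · simpa [Subtype.ext_iff, eq_comm] using hx 0
  · simpa [Subtype.ext_iff, eq_comm] using hx 1
  · intro h
    have h' : 2 • x 0 = 2 • x 1 := congrArg Subtype.val h
    apply hx 2
    rw [← hx2, nsmul_add, ← h', ← add_nsmul, nsmul_four_eq_zero]

theorem succ_le_card_range_nsmul_two (hC : IsPerfectCode (DoobGraphZ m n' n'') C) :
    n'' + 1 ≤ Nat.card (nsmulAddMonoidHom 2 : DoobVtx m n' n'' ⧸ C →+ _).range := by
  -- the generator `gen (.inr (.inr (j, 1)))` is `2` in the `j`-th `ℤ₄` coordinate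
  let f : Option (Fin n'') → DoobVtx m n' n'' ⧸ C := fun o =>
    ((o.map fun j => .inr (.inr (j, 1))).elim 0 (gen m n' n'') : _)
  have hf : Injective f := (hC.bijective_mk isCayley_gen gen_injective).1.comp
    (Option.map_injective fun j j' h => by simpa using h)
  have hR : ∀ o, f o ∈ (nsmulAddMonoidHom 2 : DoobVtx m n' n'' ⧸ C →+ _).range := by
    rintro (_ | j)
    · exact zero_mem _
    · refine ⟨(gen m n' n'' (.inr (.inr (j, 0))) : _), ?_⟩
      simp only [f, nsmulAddMonoidHom_apply, ← QuotientAddGroup.mk_nsmul, Option.map_some,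
        Option.elim_some, gen, Sum.elim_inr, Prod.smul_mk, smul_zero, ← Pi.single_smul]
      rfl
  have hle := Nat.card_le_card_of_injective (fun o => (⟨f o, hR o⟩ : _)) fun a b h =>
    hf (congrArg Subtype.val h)
  rwa [Finite.card_option, Nat.card_fin] at hle

theorem ne_one_of_four_dvd_card_ker (hC : IsPerfectCode (DoobGraphZ m n' n'') C)
    (hK : 4 ∣ Nat.card (nsmulAddMonoidHom 2 : DoobVtx m n' n'' ⧸ C →+ _).ker)
    (hR : 2 ∣ Nat.card (nsmulAddMonoidHom 2 : DoobVtx m n' n'' ⧸ C →+ _).range) :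
    n'' ≠ 1 := by
  classical
  rintro rfl
  have hsum := sum_univ_eq_zero_of_four_dvd nsmul_four_eq_zero hK hR
  rw [hC.sum_univ_quotient isCayley_gen gen_injective, sum_gen] at hsum
  have hball : ((0, 0, fun _ => 2) : DoobVtx m n' 1) = gen m n' 1 (.inr (.inr (0, 1))) := by
    simp only [gen, Sum.elim_inr, Prod.mk.injEq, true_and]
    funext j
    fin_cases j
    rfl
  rw [hball] at hsum
  exact Option.some_ne_none _ ((hC.bijective_mk isCayley_gen gen_injective).1 hsum)

end DoobGraphZ

theorem Nat.even_of_two_pow_eq_three_mul_add_one {k a : ℕ} (h : 2 ^ k = 3 * a + 1) :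
    Even k := by
  obtain hk | ⟨j, rfl⟩ := Nat.even_or_odd k
  · exact hk
  · have h4 : 4 ^ j % 3 = 1 := by rw [Nat.pow_mod]; simp
    rw [pow_succ, pow_mul, show 2 ^ 2 = 4 from rfl] at h
    omega

open DoobGraphZ

theorem additive_perfect_code_parameters (m n' n'' : ℕ) (hm : 1 ≤ m)
    (C : AddSubgroup (DoobVtx m n' n''))
    (hC : IsPerfectCode (DoobGraphZ m n' n'') (C : Set (DoobVtx m n' n''))) :
    n'' ≠ 1 ∧ ∃ Γ Δ : ℕ, Even Γ ∧ 2 ≤ Δ ∧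
      3 * (2 * m + n' + n'') + 1 = 2 ^ (Γ + 2 * Δ) ∧
      3 * n' + n'' + 1 = 2 ^ (Γ + Δ) ∧
      n'' + 1 ≤ 2 ^ Δ := by
  set d : DoobVtx m n' n'' ⧸ C →+ DoobVtx m n' n'' ⧸ C := nsmulAddMonoidHom 2
  obtain ⟨E, hE⟩ := exists_card_addSubgroup_eq_two_pow C d.ker
  obtain ⟨Δ, hΔ⟩ := exists_card_addSubgroup_eq_two_pow C d.range
  have hΔE : Δ ≤ E := by
    have := AddSubgroup.card_dvd_of_le (range_nsmul_two_le_ker (nsmul_four_eq_zero (C := C)))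
    rwa [hΔ, hE, Nat.pow_dvd_pow_iff_le_right one_lt_two] at this
  have h2Δ : 2 ≤ Δ := by
    have h2 := two_lt_card_range_nsmul_two hm hC
    rw [hΔ] at h2
    by_contra! hlt
    interval_cases Δ <;> simp at h2
  have hQ : 2 ^ (Δ + E) = 3 * (2 * m + n' + n'') + 1 := by
    rw [pow_add, ← hΔ, ← hE, ← AddSubgroup.index_ker, mul_comm, AddSubgroup.card_mul_index,
      card_quotient hC]
  have hK : 2 ^ E = 3 * n' + n'' + 1 := hE ▸ card_ker_nsmul_two hC
  refine ⟨ne_one_of_four_dvd_card_ker hC ?_ ?_, E - Δ, Δ, ?_, h2Δ, ?_, ?_, ?_⟩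
  · rw [hE]
    exact pow_dvd_pow 2 (h2Δ.trans hΔE)
  · rw [hΔ]
    exact dvd_pow_self 2 (by omega)
  · have := Nat.even_of_two_pow_eq_three_mul_add_one hQ
    rw [Nat.even_iff] at this ⊢
    omega
  · rw [show E - Δ + 2 * Δ = Δ + E by omega, hQ]
  · rw [Nat.sub_add_cancel hΔE, hK]
  · exact hΔ ▸ succ_le_card_range_nsmul_two hC
end

section
/- Let k, r ≥ 1 be integers. For each pair (i,j) with 1 ≤ i ≤ k and 1 ≤ j ≤ r, let f_{i,j}, g_{i,j} : E2^3 → E2 be functions such that the set C_{i,j} = {(x̄, f_{i,j}(x̄), g_{i,j}(x̄)) : x̄ ∈ E2^3} is a 1-perfect code in the Hamming graph H(5,4). Define f : (E2^3)^{k×r} → E2^k by f(x)_i = Σ_{j=1}^r f_{i,j}(x_{i,j}) and g : (E2^3)^{k×r} → E2^r by g(x)_j = Σ_{i=1}^k g_{i,j}(x_{i,j}). Let C' ⊆ E2^k and C'' ⊆ E2^r be 1-perfect codes in the Hamming graphs H(k,4) and H(r,4) respectively. Then the set C = {(x, f(x)+c', g(x)+c'') : x ∈ (E2^3)^{k×r},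 c' ∈ C', c'' ∈ C''} is a 1-perfect code in the Hamming graph H(3kr+k+r, 4) on vertex set (E2^3)^{k×r} × E2^k × E2^r. -/
open SimpleGraph Polynomial

/-- The Galois ring `GR(4²)`, realized as the quotient ring
`(ZMod 4)[X]/(X² + X + 1)`. -/
abbrev E4 : Type := AdjoinRoot (X ^ 2 + X + 1 : Polynomial (ZMod 4))

/-- The Galois field `GF(4)`, realized as `(ZMod 2)[X]/(X² + X + 1)`. -/
abbrev E2 : Type := AdjoinRoot (X ^ 2 + X + 1 : Polynomial (ZMod 2))

/-- `ω`, the image of `X` in `E4`. -/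
noncomputable def ω4 : E4 := AdjoinRoot.root (X ^ 2 + X + 1 : Polynomial (ZMod 4))

/-- `ω`, the image of `X` in `E2`. -/
noncomputable def ω2 : E2 := AdjoinRoot.root (X ^ 2 + X + 1 : Polynomial (ZMod 2))

/-- The set `ε = {1, ω, ω², −1, −ω, −ω²} ⊆ E4`. -/
def epsE4 : Set E4 := {1, ω4, ω4 ^ 2, -1, -ω4, -ω4 ^ 2}

/-- The Shrikhande graph on the 16 elements of `E4`: two vertices are adjacent
iff their difference lies in `ε`. -/
def ShE : SimpleGraph E4 := SimpleGraph.fromRel fun a b => a - b ∈ epsE4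

/-- The Hamming graph `H(n,4)` on `n`-tuples over `E2`. -/
def HamE (n : ℕ) : SimpleGraph (Fin n → E2) :=
  boxPi fun _ : Fin n => (⊤ : SimpleGraph E2)

/-- The Hamming graph `H(5,4)`, on the vertex set `E2³ × E2 × E2`. -/
def H5 : SimpleGraph ((Fin 3 → E2) × E2 × E2) :=
  (boxPi fun _ : Fin 3 => (⊤ : SimpleGraph E2)) □
    ((⊤ : SimpleGraph E2) □ (⊤ : SimpleGraph E2))

/-- The Hamming graph `H(3kr + k + r, 4)`, on the vertex set
`(E2³)^{k×r} × E2^k × E2^r`. -/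
def Hbig (k r : ℕ) :
    SimpleGraph ((Fin k × Fin r → (Fin 3 → E2)) × (Fin k → E2) × (Fin r → E2)) :=
  (boxPi fun _ : Fin k × Fin r => boxPi fun _ : Fin 3 => (⊤ : SimpleGraph E2)) □
    (HamE k □ HamE r)


/-!
Write a vertex as `(y, F y + α, G y + β)`, where `F` and `G` are the row and column sums.
A codeword `(x, F x + c', G x + c'')` covering it must have `c'` covering `α` in `C'` and `c''`
covering `β` in `C''`, which pins down `c'` and `c''`. If `c' = α` or `c'' = β` the codeword is
the one with `x = y`. Otherwise `x` is a neighbour of `y` with `F x - F y = α - c'` and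
`G x - G y = β - c''`, both of weight one. Each local code `C_{i,j}` says exactly that
`z ↦ (f_{i,j} z, g_{i,j} z)` maps the neighbours of a point bijectively onto the pairs of changed
values; since changing the block `x_{i,j}` changes only row `i` of `F` and column `j` of `G`, the
map `x ↦ (F x, G x)` sends the neighbours of `y` bijectively onto pairs of Hamming neighbours of
`F y` and `G y`, so exactly one such `x` exists.
-/

open Function Set

def AdjOrEq {V : Type*} (G : SimpleGraph V) (v w : V) : Prop := v = w ∨ G.Adj v w

lemma adjOrEq_boxProd_iff {V W : Type*} {G : SimpleGraph V} {H : SimpleGraph W} {a c : V}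
    {b d : W} : AdjOrEq (G □ H) (a, b) (c, d) ↔ a = c ∧ AdjOrEq H b d ∨ G.Adj a c ∧ b = d := by
  simp only [AdjOrEq, boxProd_adj, Prod.mk.injEq]
  tauto

lemma adjOrEq_top_boxProd_top {V W : Type*} {a c : V} {b d : W} :
    AdjOrEq ((⊤ : SimpleGraph V) □ (⊤ : SimpleGraph W)) (a, b) (c, d) ↔ a = c ∨ b = d := by
  rw [adjOrEq_boxProd_iff]
  simp only [AdjOrEq, top_adj]
  tauto

lemma boxPi_adj {ι : Type*} {V : ι → Type*} {G : ∀ i, SimpleGraph (V i)} {x y : ∀ i, V i} :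
    (boxPi G).Adj x y ↔ ∃ i, (G i).Adj (x i) (y i) ∧ ∀ j, j ≠ i → x j = y j :=
  Iff.rfl

lemma boxPi_adj_iff_exists_update {ι : Type*} [DecidableEq ι] {V : ι → Type*}
    {G : ∀ i, SimpleGraph (V i)} {x y : ∀ i, V i} :
    (boxPi G).Adj x y ↔ ∃ i z, (G i).Adj (x i) z ∧ y = update x i z := by
  constructor
  · rintro ⟨i, hi, hx⟩
    refine ⟨i, y i, hi, funext fun j => ?_⟩
    rcases eq_or_ne j i with rfl | hj
    · simp
    · simp [hj, hx j hj]
  · rintro ⟨i, z, hz, rfl⟩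
    exact ⟨i, by simpa using hz, fun j hj => (update_of_ne hj z x).symm⟩

def BijOnNeighborSets {X Y₁ Y₂ : Type*} (GX : SimpleGraph X) (H₁ : SimpleGraph Y₁)
    (H₂ : SimpleGraph Y₂) (F : X → Y₁) (G : X → Y₂) : Prop :=
  ∀ y, BijOn (fun x => (F x, G x)) (GX.neighborSet y)
    (H₁.neighborSet (F y) ×ˢ H₂.neighborSet (G y))

section GraphCode

variable {B A : Type*} {GB : SimpleGraph B} {φ ψ : B → A}

lemma adjOrEq_graph_iff {y z : B} {a b : A} :
    AdjOrEq (GB □ (⊤ □ ⊤)) (y, a, b) (z, φ z, ψ z) ↔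
      y = z ∧ (a = φ z ∨ b = ψ z) ∨ GB.Adj y z ∧ a = φ z ∧ b = ψ z := by
  rw [adjOrEq_boxProd_iff, adjOrEq_top_boxProd_top, Prod.mk.injEq]

lemma eq_of_adjOrEq_graph (h : IsPerfectCode (GB □ (⊤ □ ⊤)) {p | ∃ z, p = (z, φ z, ψ z)})
    {v : B × A × A} {z z' : B} (hz : AdjOrEq (GB □ (⊤ □ ⊤)) v (z, φ z, ψ z))
    (hz' : AdjOrEq (GB □ (⊤ □ ⊤)) v (z', φ z', ψ z')) : z = z' :=
  congrArg Prod.fst ((h v).unique ⟨⟨z, rfl⟩, hz⟩ ⟨⟨z', rfl⟩, hz'⟩)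

theorem bijOnNeighborSets_of_isPerfectCode
    (h : IsPerfectCode (GB □ (⊤ □ ⊤)) {p | ∃ z, p = (z, φ z, ψ z)}) :
    BijOnNeighborSets GB ⊤ ⊤ φ ψ := by
  intro y
  refine ⟨fun z hz => ?_, fun z hz z' hz' hzz' => ?_, ?_⟩
  · -- `(y, φ z, ψ z)` is covered by the codeword at `z`, and also by the one at `y` if `φ` or
    -- `ψ` agree at `y` and `z`
    have : ¬(φ z = φ y ∨ ψ z = ψ y) := fun hyz => GB.ne_of_adj hz <|
      eq_of_adjOrEq_graph h (adjOrEq_graph_iff.2 (Or.inl ⟨rfl, hyz⟩))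
        (adjOrEq_graph_iff.2 (Or.inr ⟨hz, rfl, rfl⟩))
    simp only [mem_prod, mem_neighborSet, top_adj]
    tauto
  · obtain ⟨hφ, hψ⟩ := Prod.mk.inj hzz'
    exact eq_of_adjOrEq_graph h (v := (y, φ z, ψ z)) (adjOrEq_graph_iff.2 (Or.inr ⟨hz, rfl, rfl⟩))
      (adjOrEq_graph_iff.2 (Or.inr ⟨hz', hφ, hψ⟩))
  · rintro ⟨a, b⟩ ⟨ha, hb⟩
    obtain ⟨-, ⟨⟨z, rfl⟩, hcov⟩, -⟩ := h (y, a, b)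
    rcases adjOrEq_graph_iff.1 hcov with ⟨rfl, hab⟩ | ⟨hz, rfl, rfl⟩
    · rcases hab with rfl | rfl
      exacts [(ha rfl).elim, (hb rfl).elim]
    · exact ⟨z, hz, rfl⟩

end GraphCode

def IsAddLeftInvariant {Y : Type*} [Add Y] (H : SimpleGraph Y) : Prop :=
  ∀ w u v : Y, H.Adj (w + u) (w + v) ↔ H.Adj u v

section Hamming

variable {ι A : Type*} [AddGroup A]

lemma isAddLeftInvariant_hamming :
    IsAddLeftInvariant (boxPi fun _ : ι => (⊤ : SimpleGraph A)) := by
  intro w u v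
  simp only [boxPi_adj, top_adj, Pi.add_apply, ne_eq, add_right_inj]

lemma hamming_adj_iff [DecidableEq ι] {u v : ι → A} :
    (boxPi fun _ : ι => (⊤ : SimpleGraph A)).Adj u v ↔ ∃ i d, d ≠ 0 ∧ v = u + Pi.single i d := by
  rw [boxPi_adj_iff_exists_update]
  constructor
  · rintro ⟨i, z, hz, rfl⟩
    refine ⟨i, -u i + z, by simpa [neg_add_eq_zero] using hz, funext fun j => ?_⟩
    rcases eq_or_ne j i with rfl | hj
    · simp
    · simp [hj]
  · rintro ⟨i, d, hd, rfl⟩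
    refine ⟨i, u i + d, by simpa using hd, funext fun j => ?_⟩
    rcases eq_or_ne j i with rfl | hj
    · simp
    · simp [hj]

lemma Pi.eq_of_single_eq_single {M : Type*} [Zero M] [DecidableEq ι] {i i' : ι} {d d' : M}
    (h : (Pi.single i d : ι → M) = Pi.single i' d') (hd : d ≠ 0) : i = i' := by
  by_contra hne
  exact hd (by simpa [hne] using congrFun h i)

end Hamming

section RowColumnSums

variable {ι κ B A : Type*} [AddCommGroup A]

def rowSum [Fintype κ] (f : ι → κ → B → A) (x : ι × κ → B) : ι → A :=
  fun i => ∑ j, f i j (x (i, j))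

def colSum [Fintype ι] (g : ι → κ → B → A) (x : ι × κ → B) : κ → A :=
  fun j => ∑ i, g i j (x (i, j))

lemma sum_apply_update [Fintype κ] [DecidableEq κ] (h : κ → B → A) (w : κ → B) (j₀ : κ)
    (z : B) :
    ∑ j, h j (update w j₀ z j) = ∑ j, h j (w j) + (h j₀ z - h j₀ (w j₀)) := by
  rw [Finset.sum_eq_add_sum_sdiff_singleton_of_mem (Finset.mem_univ j₀),
    Finset.sum_eq_add_sum_sdiff_singleton_of_mem (Finset.mem_univ j₀) (fun j => h j (w j)),
    update_self, Finset.sum_congr rfl fun j hj => by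
      rw [update_of_ne (Finset.notMem_singleton.1 (Finset.mem_sdiff.1 hj).2)]]
  abel

lemma rowSum_update [Fintype κ] [DecidableEq ι] [DecidableEq κ] (f : ι → κ → B → A)
    (x : ι × κ → B) (i₀ : ι) (j₀ : κ) (z : B) :
    rowSum f (update x (i₀, j₀) z) =
      rowSum f x + Pi.single i₀ (f i₀ j₀ z - f i₀ j₀ (x (i₀, j₀))) := by
  funext i
  rcases eq_or_ne i i₀ with rfl | hi
  · have hrow : ∀ j, update x (i, j₀) z (i, j) = update (fun j => x (i, j)) j₀ z j := by
      intro j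
      simp [update_apply]
    simp only [rowSum, hrow, sum_apply_update, Pi.add_apply, Pi.single_eq_same]
  · have hrow : ∀ j, update x (i₀, j₀) z (i, j) = x (i, j) := fun j =>
      update_of_ne (by simp [hi]) z x
    simp only [rowSum, hrow, Pi.add_apply, Pi.single_eq_of_ne hi, add_zero]

lemma colSum_update [Fintype ι] [DecidableEq ι] [DecidableEq κ] (g : ι → κ → B → A)
    (x : ι × κ → B) (i₀ : ι) (j₀ : κ) (z : B) :
    colSum g (update x (i₀, j₀) z) =
      colSum g x + Pi.single j₀ (g i₀ j₀ z - g i₀ j₀ (x (i₀, j₀))) := by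
  funext j
  rcases eq_or_ne j j₀ with rfl | hj
  · have hcol : ∀ i, update x (i₀, j) z (i, j) = update (fun i => x (i, j)) i₀ z i := by
      intro i
      simp [update_apply]
    simp only [colSum, hcol, sum_apply_update, Pi.add_apply, Pi.single_eq_same]
  · have hcol : ∀ i, update x (i₀, j₀) z (i, j) = x (i, j) := fun i =>
      update_of_ne (by simp [hj]) z x
    simp only [colSum, hcol, Pi.add_apply, Pi.single_eq_of_ne hj, add_zero]

theorem bijOnNeighborSets_rowSum_colSum [Fintype ι] [Fintype κ] [DecidableEq ι] [DecidableEq κ]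
    {GB : SimpleGraph B} {f g : ι → κ → B → A}
    (hloc : ∀ i j, BijOnNeighborSets GB ⊤ ⊤ (f i j) (g i j)) :
    BijOnNeighborSets (boxPi fun _ => GB) (boxPi fun _ : ι => (⊤ : SimpleGraph A))
      (boxPi fun _ : κ => (⊤ : SimpleGraph A)) (rowSum f) (colSum g) := by
  intro y
  refine ⟨fun x hx => ?_, fun x₁ hx₁ x₂ hx₂ hx => ?_, fun ⟨a, b⟩ ⟨ha, hb⟩ => ?_⟩
  · obtain ⟨⟨i, j⟩, z, hz, rfl⟩ := boxPi_adj_iff_exists_update.1 hx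
    obtain ⟨hf, hg⟩ := (hloc i j _).mapsTo hz
    exact ⟨hamming_adj_iff.2 ⟨i, _, sub_ne_zero.2 (Ne.symm hf), rowSum_update ..⟩,
      hamming_adj_iff.2 ⟨j, _, sub_ne_zero.2 (Ne.symm hg), colSum_update ..⟩⟩
  · obtain ⟨⟨i₁, j₁⟩, z₁, hz₁, rfl⟩ := boxPi_adj_iff_exists_update.1 hx₁
    obtain ⟨⟨i₂, j₂⟩, z₂, hz₂, rfl⟩ := boxPi_adj_iff_exists_update.1 hx₂
    obtain ⟨hf, hg⟩ := (hloc i₁ j₁ _).mapsTo hz₁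
    simp only [Prod.mk.injEq, rowSum_update, colSum_update, add_right_inj] at hx
    obtain ⟨hF, hG⟩ := hx
    obtain rfl := Pi.eq_of_single_eq_single hF (sub_ne_zero.2 (Ne.symm hf))
    obtain rfl := Pi.eq_of_single_eq_single hG (sub_ne_zero.2 (Ne.symm hg))
    rw [Pi.single_inj, sub_left_inj] at hF hG
    rw [(hloc i₁ j₁ _).injOn hz₁ hz₂ (Prod.ext hF hG)]
  · obtain ⟨i, d, hd, rfl⟩ := hamming_adj_iff.1 ha
    obtain ⟨j, e, he, rfl⟩ := hamming_adj_iff.1 hb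
    obtain ⟨z, hz, hfg⟩ := (hloc i j (y (i, j))).surjOn
      (show (f i j (y (i, j)) + d, g i j (y (i, j)) + e) ∈ _ by simpa using ⟨hd, he⟩)
    obtain ⟨hf, hg⟩ := Prod.mk.inj hfg
    refine ⟨update y (i, j) z, boxPi_adj_iff_exists_update.2 ⟨(i, j), z, hz, rfl⟩, ?_⟩
    simp only [rowSum_update, colSum_update, hf, hg, add_sub_cancel_left]

end RowColumnSums

section TwistedProduct

def twistedCode {X Y₁ Y₂ : Type*} [Add Y₁] [Add Y₂] (F : X → Y₁) (G : X → Y₂) (C₁ : Set Y₁)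
    (C₂ : Set Y₂) : Set (X × Y₁ × Y₂) :=
  {p | ∃ x c₁ c₂, c₁ ∈ C₁ ∧ c₂ ∈ C₂ ∧ p = (x, F x + c₁, G x + c₂)}

variable {X Y₁ Y₂ : Type*} [AddCommGroup Y₁] [AddCommGroup Y₂]
  {GX : SimpleGraph X} {H₁ : SimpleGraph Y₁} {H₂ : SimpleGraph Y₂} {F : X → Y₁} {G : X → Y₂}

lemma IsAddLeftInvariant.adj_iff_adj_of_add_eq_add {Y : Type*} [AddCommGroup Y]
    {H : SimpleGraph Y} (hH : IsAddLeftInvariant H) {u v a b : Y} (h : u + a = v + b) :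
    H.Adj u v ↔ H.Adj b a := by
  rw [← hH (u - b) b a, sub_add_cancel, sub_add_eq_add_sub, h, add_sub_cancel_right]

lemma adjOrEq_twisted_iff (hH₁ : IsAddLeftInvariant H₁) (hH₂ : IsAddLeftInvariant H₂)
    {x y : X} {α c₁ : Y₁} {β c₂ : Y₂} :
    AdjOrEq (GX □ (H₁ □ H₂)) (y, F y + α, G y + β) (x, F x + c₁, G x + c₂) ↔
      y = x ∧ (α = c₁ ∧ AdjOrEq H₂ β c₂ ∨ H₁.Adj α c₁ ∧ β = c₂) ∨
        GX.Adj y x ∧ F y + α = F x + c₁ ∧ G y + β = G x + c₂ := by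
  rw [adjOrEq_boxProd_iff, Prod.mk.injEq]
  refine or_congr_left (and_congr_right fun hyx => ?_)
  subst hyx
  rw [adjOrEq_boxProd_iff]
  simp only [AdjOrEq, add_right_inj, hH₁ (F y), hH₂ (G y)]

lemma BijOnNeighborSets.adj_of_add_eq_add (hφ : BijOnNeighborSets GX H₁ H₂ F G)
    (hH₁ : IsAddLeftInvariant H₁) (hH₂ : IsAddLeftInvariant H₂)
    {x y : X} {α c₁ : Y₁} {β c₂ : Y₂} (hx : GX.Adj y x) (hF : F y + α = F x + c₁)
    (hG : G y + β = G x + c₂) : H₁.Adj c₁ α ∧ H₂.Adj c₂ β := by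
  obtain ⟨h₁, h₂⟩ := (hφ y).mapsTo hx
  exact ⟨(hH₁.adj_iff_adj_of_add_eq_add hF).1 h₁, (hH₂.adj_iff_adj_of_add_eq_add hG).1 h₂⟩

lemma BijOnNeighborSets.exists_adjOrEq_twisted (hφ : BijOnNeighborSets GX H₁ H₂ F G)
    (hH₁ : IsAddLeftInvariant H₁) (hH₂ : IsAddLeftInvariant H₂) (y : X)
    {α c₁ : Y₁} {β c₂ : Y₂} (h₁ : AdjOrEq H₁ α c₁) (h₂ : AdjOrEq H₂ β c₂) :
    ∃ x, AdjOrEq (GX □ (H₁ □ H₂)) (y, F y + α, G y + β) (x, F x + c₁, G x + c₂) := by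
  simp only [adjOrEq_twisted_iff hH₁ hH₂]
  rcases h₁ with rfl | h₁
  · exact ⟨y, Or.inl ⟨rfl, Or.inl ⟨rfl, h₂⟩⟩⟩
  rcases h₂ with rfl | h₂
  · exact ⟨y, Or.inl ⟨rfl, Or.inr ⟨h₁, rfl⟩⟩⟩
  have hF : F y + α = (F y + α - c₁) + c₁ := (sub_add_cancel _ _).symm
  have hG : G y + β = (G y + β - c₂) + c₂ := (sub_add_cancel _ _).symm
  have hmem : (F y + α - c₁, G y + β - c₂) ∈ H₁.neighborSet (F y) ×ˢ H₂.neighborSet (G y) :=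
    ⟨(hH₁.adj_iff_adj_of_add_eq_add hF).2 h₁.symm, (hH₂.adj_iff_adj_of_add_eq_add hG).2 h₂.symm⟩
  obtain ⟨x, hx, hFG⟩ := (hφ y).surjOn hmem
  obtain ⟨hFx, hGx⟩ := Prod.mk.inj hFG
  exact ⟨x, Or.inr ⟨hx, hFx ▸ hF, hGx ▸ hG⟩⟩

lemma BijOnNeighborSets.adjOrEq_of_adjOrEq_twisted (hφ : BijOnNeighborSets GX H₁ H₂ F G)
    (hH₁ : IsAddLeftInvariant H₁) (hH₂ : IsAddLeftInvariant H₂)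
    {x y : X} {α c₁ : Y₁} {β c₂ : Y₂}
    (h : AdjOrEq (GX □ (H₁ □ H₂)) (y, F y + α, G y + β) (x, F x + c₁, G x + c₂)) :
    AdjOrEq H₁ α c₁ ∧ AdjOrEq H₂ β c₂ := by
  rcases (adjOrEq_twisted_iff hH₁ hH₂).1 h with ⟨-, ⟨rfl, h₂⟩ | ⟨h₁, rfl⟩⟩ | ⟨hx, hF, hG⟩
  · exact ⟨Or.inl rfl, h₂⟩
  · exact ⟨Or.inr h₁, Or.inl rfl⟩
  · obtain ⟨h₁, h₂⟩ := hφ.adj_of_add_eq_add hH₁ hH₂ hx hF hG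
    exact ⟨Or.inr h₁.symm, Or.inr h₂.symm⟩

lemma BijOnNeighborSets.eq_of_adjOrEq_twisted (hφ : BijOnNeighborSets GX H₁ H₂ F G)
    (hH₁ : IsAddLeftInvariant H₁) (hH₂ : IsAddLeftInvariant H₂)
    {x x' y : X} {α c₁ : Y₁} {β c₂ : Y₂}
    (h : AdjOrEq (GX □ (H₁ □ H₂)) (y, F y + α, G y + β) (x, F x + c₁, G x + c₂))
    (h' : AdjOrEq (GX □ (H₁ □ H₂)) (y, F y + α, G y + β) (x', F x' + c₁, G x' + c₂)) :
    x = x' := by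
  rw [adjOrEq_twisted_iff hH₁ hH₂] at h h'
  rcases h with ⟨rfl, hc⟩ | ⟨hx, hF, hG⟩ <;> rcases h' with ⟨rfl, hc'⟩ | ⟨hx', hF', hG'⟩
  · rfl
  · obtain ⟨h₁, h₂⟩ := hφ.adj_of_add_eq_add hH₁ hH₂ hx' hF' hG'
    rcases hc with ⟨rfl, -⟩ | ⟨-, rfl⟩
    exacts [(H₁.irrefl h₁).elim, (H₂.irrefl h₂).elim]
  · obtain ⟨h₁, h₂⟩ := hφ.adj_of_add_eq_add hH₁ hH₂ hx hF hG
    rcases hc' with ⟨rfl, -⟩ | ⟨-, rfl⟩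
    exacts [(H₁.irrefl h₁).elim, (H₂.irrefl h₂).elim]
  · exact (hφ y).injOn hx hx'
      (Prod.ext (add_right_cancel (hF.symm.trans hF')) (add_right_cancel (hG.symm.trans hG')))

theorem BijOnNeighborSets.isPerfectCode_twistedCode (hφ : BijOnNeighborSets GX H₁ H₂ F G)
    (hH₁ : IsAddLeftInvariant H₁) (hH₂ : IsAddLeftInvariant H₂)
    {C₁ : Set Y₁} {C₂ : Set Y₂} (hC₁ : IsPerfectCode H₁ C₁) (hC₂ : IsPerfectCode H₂ C₂) :
    IsPerfectCode (GX □ (H₁ □ H₂)) (twistedCode F G C₁ C₂) := by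
  rintro ⟨y, a, b⟩
  obtain ⟨α, rfl⟩ : ∃ α, F y + α = a := ⟨a - F y, add_sub_cancel _ _⟩
  obtain ⟨β, rfl⟩ : ∃ β, G y + β = b := ⟨b - G y, add_sub_cancel _ _⟩
  obtain ⟨c₁, ⟨hc₁, hαc₁⟩, hc₁_unique⟩ := hC₁ α
  obtain ⟨c₂, ⟨hc₂, hβc₂⟩, hc₂_unique⟩ := hC₂ β
  obtain ⟨x, hx⟩ := hφ.exists_adjOrEq_twisted hH₁ hH₂ y hαc₁ hβc₂
  refine ⟨_, ⟨⟨x, c₁, c₂, hc₁, hc₂, rfl⟩, hx⟩, ?_⟩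
  rintro _ ⟨⟨x', c₁', c₂', hc₁', hc₂', rfl⟩, hx'⟩
  obtain ⟨h₁, h₂⟩ := hφ.adjOrEq_of_adjOrEq_twisted hH₁ hH₂ hx'
  obtain rfl := hc₁_unique c₁' ⟨hc₁', h₁⟩
  obtain rfl := hc₂_unique c₂' ⟨hc₂', h₂⟩
  rw [hφ.eq_of_adjOrEq_twisted hH₁ hH₂ hx' hx]

end TwistedProduct

theorem perfect_code_product_construction_general (k r : ℕ)
    (f g : Fin k → Fin r → (Fin 3 → E2) → E2)
    (hfg : ∀ i j, IsPerfectCode H5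
      {p : (Fin 3 → E2) × E2 × E2 | ∃ x : Fin 3 → E2, p = (x, f i j x, g i j x)})
    (C' : Set (Fin k → E2)) (hC' : IsPerfectCode (HamE k) C')
    (C'' : Set (Fin r → E2)) (hC'' : IsPerfectCode (HamE r) C'') :
    IsPerfectCode (Hbig k r)
      {p : (Fin k × Fin r → (Fin 3 → E2)) × (Fin k → E2) × (Fin r → E2) |
        ∃ (x : Fin k × Fin r → (Fin 3 → E2)) (c' : Fin k → E2) (c'' : Fin r → E2),
          c' ∈ C' ∧ c'' ∈ C'' ∧
          p = (x, fun i => (∑ j : Fin r, f i j (x (i, j))) + c' i,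
                  fun j => (∑ i : Fin k, g i j (x (i, j))) + c'' j)} := by
  have hloc : ∀ i j, BijOnNeighborSets (boxPi fun _ : Fin 3 => ⊤) ⊤ ⊤ (f i j) (g i j) :=
    fun i j => bijOnNeighborSets_of_isPerfectCode (hfg i j)
  exact (bijOnNeighborSets_rowSum_colSum hloc).isPerfectCode_twistedCode
    isAddLeftInvariant_hamming isAddLeftInvariant_hamming hC' hC''

theorem perfect_code_product_construction (k r : ℕ) (hk : 1 ≤ k) (hr : 1 ≤ r)
    (f g : Fin k → Fin r → (Fin 3 → E2) → E2)
    (hfg : ∀ i j, IsPerfectCode H5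
      {p : (Fin 3 → E2) × E2 × E2 | ∃ x : Fin 3 → E2, p = (x, f i j x, g i j x)})
    (C' : Set (Fin k → E2)) (hC' : IsPerfectCode (HamE k) C')
    (C'' : Set (Fin r → E2)) (hC'' : IsPerfectCode (HamE r) C'') :
    IsPerfectCode (Hbig k r)
      {p : (Fin k × Fin r → (Fin 3 → E2)) × (Fin k → E2) × (Fin r → E2) |
        ∃ (x : Fin k × Fin r → (Fin 3 → E2)) (c' : Fin k → E2) (c'' : Fin r → E2),
          c' ∈ C' ∧ c'' ∈ C'' ∧
          p = (x, fun i => (∑ j : Fin r, f i j (x (i, j))) + c' i,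
                  fun j => (∑ i : Fin k, g i j (x (i, j))) + c'' j)} :=
  perfect_code_product_construction_general k r f g hfg C' hC' C'' hC''
end

section
/- For every bijection φ : ZMod 4 → E2, the set {(ωx + y, φ(z), φ(x+y+z), φ(x+2y+3z)) : x, y, z ∈ ZMod 4} ⊆ E4 × E2 × E2 × E2 is a 1-perfect code in the Doob graph D(1,3) on vertex set E4 × E2^3. -/
open SimpleGraph Polynomial

/-- The Doob graph `D(1,3)` on the vertex set `E4 × E2 × E2 × E2`: the box
product of one copy of the Shrikhande graph and three copies of `K₄`. -/
def Doob13 : SimpleGraph (E4 × E2 × E2 × E2) :=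
  ShE □ ((⊤ : SimpleGraph E2) □ ((⊤ : SimpleGraph E2) □ (⊤ : SimpleGraph E2)))

/-!
Coordinatise `E4` by `(a, b) ↦ ω a + b` and `E2` by `φ`. Then `D(1,3)` becomes a graph on
`(ZMod 4)⁵` in which the closed neighbourhood of every vertex is a translate of one ball: `0`,
the six Shrikhande directions in the first two coordinates, and the nonzero multiples of the
three remaining unit vectors. The code becomes the kernel of the syndrome map
`(a, b, u, v, w) ↦ (v - a - b - u, w - a - 2b - 3u)`, and the kernel of a homomorphism is a
perfect code as soon as it restricts to a bijection from the ball onto its target. Here the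
ball has `1 + 6 + 3 · 3 = 16` elements and a direct computation shows that their syndromes are
the sixteen elements of `(ZMod 4)²`.
-/

open Set Function

namespace SimpleGraph

def Iso.boxProdCongr {V V' W W' : Type*} {G : SimpleGraph V} {G' : SimpleGraph V'}
    {H : SimpleGraph W} {H' : SimpleGraph W'} (e : G ≃g G') (f : H ≃g H') :
    (G □ H) ≃g (G' □ H') where
  toEquiv := e.toEquiv.prodCongr f.toEquiv
  map_rel_iff' := by
    intro a b
    simp only [Equiv.prodCongr_apply, Prod.map, boxProd_adj, RelIso.coe_fn_toEquiv, e.map_adj_iff,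
      f.map_adj_iff, e.apply_eq_iff_eq, f.apply_eq_iff_eq]

end SimpleGraph

theorem IsPerfectCode.of_iso {V W : Type*} {G : SimpleGraph V} {G' : SimpleGraph W}
    (e : G ≃g G') {C : Set W} (h : IsPerfectCode G (e ⁻¹' C)) : IsPerfectCode G' C := by
  intro w
  obtain ⟨c, ⟨hc, hnear⟩, huniq⟩ := h (e.symm w)
  refine ⟨e c, ⟨hc, ?_⟩, fun c' ⟨hc', hnear'⟩ => ?_⟩
  · simpa [← e.map_adj_iff, e.symm_apply_eq] using hnear
  · rw [← e.apply_symm_apply c']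
    refine congrArg e (huniq _ ⟨by simpa using hc', ?_⟩)
    simpa [← e.symm.map_adj_iff, e.symm_apply_eq] using hnear'

section CayleyBall

variable {G G' K : Type*} [AddGroup G] [AddGroup G'] [AddGroup K]

/-- `Γ` is the Cayley graph of `G` with connection set `B \ {0}`. -/
def IsCayleyBall (Γ : SimpleGraph G) (B : Set G) : Prop :=
  ∀ v c, v = c ∨ Γ.Adj v c ↔ v - c ∈ B

theorem isCayleyBall_fromRel (S : Set G) :
    IsCayleyBall (SimpleGraph.fromRel fun a b => a - b ∈ S) (insert 0 (S ∪ -S)) := by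
  intro v c
  rw [SimpleGraph.fromRel_adj, mem_insert_iff, mem_union, Set.mem_neg, neg_sub, sub_eq_zero]
  by_cases h : v = c <;> simp [h]

theorem isCayleyBall_top : IsCayleyBall (⊤ : SimpleGraph G) univ := fun v c => by
  simp [em]

theorem IsCayleyBall.boxProd {Γ : SimpleGraph G} {Γ' : SimpleGraph G'} {B : Set G} {B' : Set G'}
    (h : IsCayleyBall Γ B) (h' : IsCayleyBall Γ' B') :
    IsCayleyBall (Γ □ Γ') (B ×ˢ {0} ∪ {0} ×ˢ B') := by
  intro v c
  simp only [SimpleGraph.boxProd_adj, mem_union, mem_prod, Prod.fst_sub, Prod.snd_sub,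
    mem_singleton_iff, sub_eq_zero, Prod.ext_iff]
  rw [← h, ← h']
  tauto

theorem IsCayleyBall.comap {Γ : SimpleGraph G'} {B : Set G'} (h : IsCayleyBall Γ B)
    (f : G →+ G') (hf : Injective f) : IsCayleyBall (Γ.comap f) (f ⁻¹' B) := fun v c => by
  rw [SimpleGraph.comap_adj, mem_preimage, map_sub, ← h, hf.eq_iff]

theorem IsCayleyBall.isPerfectCode_ker {Γ : SimpleGraph G} {B : Set G} (hΓ : IsCayleyBall Γ B)
    (H : G →+ K) (hH : ∀ k, ∃! d, d ∈ B ∧ H d = k) : IsPerfectCode Γ H.ker := by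
  intro v
  obtain ⟨d, ⟨hdB, hd⟩, huniq⟩ := hH (H v)
  have hsub : v - (-d + v) = d := by rw [sub_eq_add_neg, neg_add_rev, neg_neg, add_neg_cancel_left]
  refine ⟨-d + v, ⟨?_, ?_⟩, fun c ⟨hc, hnear⟩ => ?_⟩
  · rw [SetLike.mem_coe, AddMonoidHom.mem_ker, map_add, map_neg, hd, neg_add_cancel]
  · rwa [hΓ, hsub]
  · rw [hΓ] at hnear
    have hc : H c = 0 := hc
    rw [← huniq (v - c) ⟨hnear, by rw [map_sub, hc, sub_zero]⟩, neg_sub, sub_add_cancel]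

end CayleyBall

theorem AdjoinRoot.bijective_root_mul_add {R : Type*} [CommRing R] {g : R[X]} (hg : g.Monic)
    (hg2 : g.natDegree = 2) :
    Bijective fun p : R × R => root g * algebraMap R _ p.1 + algebraMap R _ p.2 := by
  let b := (powerBasis' hg).basis.reindex (finCongr hg2)
  have hb : ∀ i, b i = root g ^ (i : ℕ) := fun i => by simp [b]; rfl
  have hcomp : (fun p : R × R => root g * algebraMap R _ p.1 + algebraMap R _ p.2) =
      b.equivFun.symm ∘ (finTwoArrowEquiv R).symm ∘ Prod.swap := by
    ext p
    simp [Module.Basis.equivFun_symm_apply, Fin.sum_univ_two, hb, Algebra.smul_def, add_comm,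
      mul_comm]
  rw [hcomp]
  exact b.equivFun.symm.bijective.comp ((finTwoArrowEquiv R).symm.bijective.comp
    Prod.swap_bijective)

noncomputable def e4Coord : ZMod 4 × ZMod 4 →+ E4 :=
  AddMonoidHom.mk' (fun p => ω4 * algebraMap (ZMod 4) E4 p.1 + algebraMap (ZMod 4) E4 p.2)
    fun p q => by simp only [Prod.fst_add, Prod.snd_add, map_add]; ring

theorem e4Coord_bijective : Bijective e4Coord :=
  AdjoinRoot.bijective_root_mul_add (by monicity!) (by compute_degree!)

theorem omega4_sq_add_omega4_add_one : ω4 ^ 2 + ω4 + 1 = 0 := by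
  have h := AdjoinRoot.mk_self (f := (X ^ 2 + X + 1 : (ZMod 4)[X]))
  rwa [map_add, map_add, map_pow, AdjoinRoot.mk_X, map_one] at h

def shrikhandeBall : Set (ZMod 4 × ZMod 4) :=
  {(0, 0), (0, 1), (0, 3), (1, 0), (3, 0), (1, 1), (3, 3)}

theorem image_e4Coord_shrikhandeBall : e4Coord '' shrikhandeBall = insert 0 (epsE4 ∪ -epsE4) := by
  have h3 : algebraMap (ZMod 4) E4 3 = -1 := by
    rw [show (3 : ZMod 4) = -1 by decide, map_neg, map_one]
  have h11 : ω4 + 1 = -ω4 ^ 2 := by linear_combination omega4_sq_add_omega4_add_one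
  have h33 : -ω4 + -1 = ω4 ^ 2 := by linear_combination -omega4_sq_add_omega4_add_one
  ext x
  simp only [shrikhandeBall, epsE4, e4Coord, image_insert_eq, image_singleton,
    AddMonoidHom.mk'_apply, map_zero, map_one, h3, mul_zero, mul_one, mul_neg, zero_add, add_zero,
    h11, h33, neg_insert, neg_singleton, neg_neg, mem_insert_iff, mem_union, mem_singleton_iff]
  tauto

theorem isCayleyBall_shrikhande : IsCayleyBall (ShE.comap e4Coord) shrikhandeBall := by
  rw [← e4Coord_bijective.injective.preimage_image shrikhandeBall, image_e4Coord_shrikhandeBall]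
  exact (isCayleyBall_fromRel epsE4).comap e4Coord e4Coord_bijective.injective

def syndrome : (ZMod 4 × ZMod 4) × ZMod 4 × ZMod 4 × ZMod 4 →+ ZMod 4 × ZMod 4 :=
  AddMonoidHom.mk'
    (fun v => (v.2.2.1 - v.1.1 - v.1.2 - v.2.1, v.2.2.2 - v.1.1 - 2 * v.1.2 - 3 * v.2.1))
    fun v w => by
      simp only [Prod.fst_add, Prod.snd_add, Prod.mk_add_mk, Prod.mk.injEq]
      constructor <;> ring

set_option synthInstance.maxSize 1024 in
set_option maxRecDepth 10000 in
theorem existsUnique_syndrome_eq : ∀ k, ∃! d,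
    d ∈ shrikhandeBall ×ˢ {0} ∪ {0} ×ˢ (univ ×ˢ {0} ∪ {0} ×ˢ (univ ×ˢ {0} ∪ {0} ×ˢ univ)) ∧
      syndrome d = k := by
  simp only [ExistsUnique, shrikhandeBall, mem_union, mem_prod, mem_insert_iff,
    mem_singleton_iff, mem_univ, true_and, and_true]
  decide

noncomputable def doobIso (φ : ZMod 4 → E2) (hφ : Bijective φ) :
    (ShE.comap e4Coord □
      (completeGraph (ZMod 4) □ (completeGraph (ZMod 4) □ completeGraph (ZMod 4)))) ≃g Doob13 :=
  Iso.boxProdCongr (Iso.comap (Equiv.ofBijective _ e4Coord_bijective) ShE)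
    (Iso.boxProdCongr (Iso.completeGraph (Equiv.ofBijective φ hφ))
      (Iso.boxProdCongr (Iso.completeGraph (Equiv.ofBijective φ hφ))
        (Iso.completeGraph (Equiv.ofBijective φ hφ))))

theorem doobIso_preimage_eq_ker (φ : ZMod 4 → E2) (hφ : Bijective φ) :
    doobIso φ hφ ⁻¹' {p | ∃ x y z : ZMod 4,
        p = (ω4 * algebraMap (ZMod 4) E4 x + algebraMap (ZMod 4) E4 y,
             φ z, φ (x + y + z), φ (x + 2 * y + 3 * z))} = (syndrome.ker : Set _) := by
  ext ⟨⟨a, b⟩, u, v, w⟩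
  change (∃ x y z : ZMod 4, (e4Coord (a, b), φ u, φ v, φ w) =
      (e4Coord (x, y), φ z, φ (x + y + z), φ (x + 2 * y + 3 * z))) ↔
    (v - a - b - u, w - a - 2 * b - 3 * u) = 0
  simp only [Prod.mk.injEq, e4Coord_bijective.injective.eq_iff, hφ.injective.eq_iff,
    Prod.mk_eq_zero]
  constructor
  · rintro ⟨x, y, z, ⟨rfl, rfl⟩, rfl, rfl, rfl⟩
    constructor <;> ring
  · rintro ⟨h₁, h₂⟩
    exact ⟨a, b, u, ⟨rfl, rfl⟩, rfl, by linear_combination h₁, by linear_combination h₂⟩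

theorem perfect_code_D13 (φ : ZMod 4 → E2) (hφ : Function.Bijective φ) :
    IsPerfectCode Doob13
      {p : E4 × E2 × E2 × E2 | ∃ x y z : ZMod 4,
        p = (ω4 * algebraMap (ZMod 4) E4 x + algebraMap (ZMod 4) E4 y,
             φ z, φ (x + y + z), φ (x + 2 * y + 3 * z))} := by
  refine IsPerfectCode.of_iso (doobIso φ hφ) ?_
  rw [doobIso_preimage_eq_ker]
  exact (isCayleyBall_shrikhande.boxProd <| isCayleyBall_top.boxProd <|
    isCayleyBall_top.boxProd isCayleyBall_top).isPerfectCode_ker syndrome existsUnique_syndrome_eq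
end
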